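/- Let (𝓕_n)_{n≥0} be an interval filtration on a d-dimensional rectangle I that is k-regular with parameter γ and direction m-regular with parameter β, where k = (k_1,…,k_d) and m = (m_1,…,m_d) are tuples of positive integers. If i ∈ {1,…,d} is a direction with m_i > k_i, then (𝓕_n) is direction (m − e_i)-regular with a parameter β′ depending only on k_i, γ and β, where e_i is the i-th canonical unit vector of ℤ^d. -/
import Mathlib


open MeasureTheory Set

structure IntervalPartition where
  a : ℝ
  b : ℝ
  m : ℕ
  m_pos : 0 < m
  t : Fin (m + 1) → ℝ
  t_mono : StrictMono t
  t_first : t 0 = a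
  t_last : t (Fin.last m) = b

namespace IntervalPartition

/-- The `i`-th breakpoint of the partition (extended to all of `ℕ`). -/
def pt (P : IntervalPartition) (i : ℕ) : ℝ :=
  P.t ⟨min i P.m, Nat.lt_succ_of_le (min_le_right _ _)⟩

/-- The underlying interval `[a, b)`. -/
def interval (P : IntervalPartition) : Set ℝ := Set.Ico P.a P.b

/-- The `i`-th atom of the partition, `[t_i, t_{i+1})`. -/
def atomN (P : IntervalPartition) (i : ℕ) : Set ℝ := Set.Ico (P.pt i) (P.pt (i + 1))

/-- The length of the `i`-th atom. -/
def atomLen (P : IntervalPartition) (i : ℕ) : ℝ := P.pt (i + 1) - P.pt i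

/-- Membership in the spline space `S_k(𝓕)`:  `(k-2)`-times continuously differentiable
on the interval and a polynomial of degree at most `k - 1` on each atom. -/
def IsSpline (k : ℕ) (P : IntervalPartition) (f : ℝ → ℝ) : Prop :=
  (2 ≤ k → ContDiffOn ℝ (k - 2 : ℕ) f P.interval) ∧
  ∀ i < P.m, ∃ p : Polynomial ℝ, p.natDegree ≤ k - 1 ∧ ∀ x ∈ P.atomN i, f x = p.eval x

/-- `P.Refines Q` : `Q` is finer than `P` (same interval, more breakpoints). -/
def Refines (P Q : IntervalPartition) : Prop :=
  P.a = Q.a ∧ P.b = Q.b ∧ Set.range P.t ⊆ Set.range Q.t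

/-- The pair `(i, j)` describes a B-spline support of order `r`:
the union of the consecutive atoms `i, …, j`, where either `j - i + 1 = r`, or
`j - i + 1 < r` and the union touches an endpoint of the interval. -/
def IsBSupportIdx (P : IntervalPartition) (r i j : ℕ) : Prop :=
  i ≤ j ∧ j < P.m ∧ (j + 1 - i = r ∨ (j + 1 - i < r ∧ (i = 0 ∨ j = P.m - 1)))

/-- The B-spline support as a set. -/
def bSupportSet (P : IntervalPartition) (i j : ℕ) : Set ℝ := Set.Ico (P.pt i) (P.pt (j + 1))

/-- The length of a B-spline support. -/
def bSupportLen (P : IntervalPartition) (i j : ℕ) : ℝ := P.pt (j + 1) - P.pt i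

/-- `k`-regularity with parameter `γ` of a single interval σ-algebra: any two B-spline
supports of order `k` at Euclidean distance zero have comparable lengths. -/
def KRegular (P : IntervalPartition) (k : ℕ) (γ : ℝ) : Prop :=
  ∀ i j i' j' : ℕ, P.IsBSupportIdx k i j → P.IsBSupportIdx k i' j' →
    P.pt i' ≤ P.pt (j + 1) → P.pt i ≤ P.pt (j' + 1) →
    P.bSupportLen i j ≤ γ * P.bSupportLen i' j'

-- The index of the atom containing `x` (junk value if there is none).
open Classical in
noncomputable def idx (P : IntervalPartition) (x : ℝ) : ℕ :=
  if h : ∃ i, i < P.m ∧ x ∈ P.atomN i then h.choose else 0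

end IntervalPartition

/-- The `d`-dimensional rectangle underlying a product of interval σ-algebras. -/
def rect {d : ℕ} (P : Fin d → IntervalPartition) : Set (Fin d → ℝ) :=
  Set.univ.pi fun δ => (P δ).interval

/-- The atom of the product σ-algebra with index vector `i`. -/
def prodAtomN {d : ℕ} (P : Fin d → IntervalPartition) (i : Fin d → ℕ) : Set (Fin d → ℝ) :=
  Set.univ.pi fun δ => (P δ).atomN (i δ)

/-- `|d(A,B)|₁` for atoms with index vectors `i`, `j`. -/
def dist1 {d : ℕ} (i j : Fin d → ℕ) : ℕ := ∑ δ, ((i δ : ℤ) - (j δ : ℤ)).natAbs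

/-- The volume of `conv(A, B)`, the smallest axis-parallel rectangle containing the
atoms with index vectors `i` and `j`. -/
def convVol {d : ℕ} (P : Fin d → IntervalPartition) (i j : Fin d → ℕ) : ℝ :=
  ∏ δ, ((P δ).pt (max (i δ) (j δ) + 1) - (P δ).pt (min (i δ) (j δ)))

/-- The kernel sum `Σ_A q^{|d(A, A_ix)|₁} / |conv(A, A_ix)| ∫_A |f|`. -/
noncomputable def kern {d : ℕ} (P : Fin d → IntervalPartition) (q : ℝ)
    (f : (Fin d → ℝ) → ℝ) (ix : Fin d → ℕ) : ℝ :=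
  ∑ ia : (∀ δ, Fin ((P δ).m)),
    q ^ dist1 (fun δ => (ia δ : ℕ)) ix / convVol P (fun δ => (ia δ : ℕ)) ix *
      ∫ y in prodAtomN P (fun δ => (ia δ : ℕ)), |f y|

/-- Coordinatewise `k`-regularity with parameter `γ` of a multivariate filtration. -/
def KRegularAll (d : ℕ) (F : ℕ → Fin d → IntervalPartition) (k : Fin d → ℕ) (γ : ℝ) : Prop :=
  ∀ n δ, (F n δ).KRegular (k δ) γ

/-- Direction `r`-regularity with parameter `β`: there is no direction `δ`, no
monotone sequence of times `n 0 ≤ n 1 ≤ …`, no strictly decreasing chain of atoms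
`prodAtomN (F (n 0)) (ix 0) ⊋ … ⊋ prodAtomN (F (n (β-1))) (ix (β-1))` and no B-spline
support `B` of order `r δ` in the `δ`-th coordinate of `F (n 0)` containing the `δ`-th
component of the first atom such that `B` is still a B-spline support of order `r δ`
in the `δ`-th coordinate of `F (n (β-1))`. -/
def DirRegular (d : ℕ) (F : ℕ → Fin d → IntervalPartition) (r : Fin d → ℕ) (β : ℕ) : Prop :=
  ¬ ∃ (δ : Fin d) (n : ℕ → ℕ) (ix : ℕ → Fin d → ℕ) (i j : ℕ),
      (∀ l l', l ≤ l' → n l ≤ n l') ∧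
      (∀ l, l < β → ∀ δ', ix l δ' < (F (n l) δ').m) ∧
      (∀ l l', l < l' → l' < β →
        prodAtomN (F (n l')) (ix l') ⊂ prodAtomN (F (n l)) (ix l)) ∧
      (F (n 0) δ).IsBSupportIdx (r δ) i j ∧
      (F (n 0) δ).atomN (ix 0 δ) ⊆ (F (n 0) δ).bSupportSet i j ∧
      ∃ i' j', (F (n (β - 1)) δ).IsBSupportIdx (r δ) i' j' ∧
        (F (n (β - 1)) δ).bSupportSet i' j' = (F (n 0) δ).bSupportSet i j

/-- The tensor product spline space: the linear span of products of coordinate splines. -/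
def TensorSplineSpan (d : ℕ) (k : Fin d → ℕ) (P : Fin d → IntervalPartition) :
    Submodule ℝ ((Fin d → ℝ) → ℝ) :=
  Submodule.span ℝ {G : (Fin d → ℝ) → ℝ |
    ∃ g : Fin d → ℝ → ℝ, (∀ δ, IntervalPartition.IsSpline (k δ) (P δ) (g δ)) ∧
      G = fun x => ∏ δ, g δ (x δ)}

/-- `g` is the orthogonal projection (in `L²` of the rectangle) of `f` onto the
tensor product spline space. -/
def IsProj (d : ℕ) (k : Fin d → ℕ) (P : Fin d → IntervalPartition)
    (f g : (Fin d → ℝ) → ℝ) : Prop :=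
  g ∈ TensorSplineSpan d k P ∧ ∀ h ∈ TensorSplineSpan d k P,
    ∫ x in rect P, g x * h x = ∫ x in rect P, f x * h x

/-- A multivariate interval filtration in standard form: it starts from the trivial
σ-algebra and at each step exactly one atom of exactly one coordinate σ-algebra is
split into two. -/
def StandardForm (d : ℕ) (F : ℕ → Fin d → IntervalPartition) : Prop :=
  (∀ δ, (F 0 δ).m = 1) ∧
  ∀ n, ∃ δ₀, (∀ δ, δ ≠ δ₀ → F (n + 1) δ = F n δ) ∧
    (F n δ₀).Refines (F (n + 1) δ₀) ∧ (F (n + 1) δ₀).m = (F n δ₀).m + 1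



/-! ### Auxiliary lemmas -/

namespace IntervalPartition

lemma pt_of_le (P : IntervalPartition) {s : ℕ} (h : s ≤ P.m) :
    P.pt s = P.t ⟨s, Nat.lt_succ_of_le h⟩ := by
  unfold pt
  congr 1
  exact Fin.ext (by simp [min_eq_left h])

lemma pt_mono (P : IntervalPartition) : Monotone P.pt := by
  intro s t h
  exact P.t_mono.monotone (by simp only [Fin.le_def]; omega)

lemma pt_lt_pt (P : IntervalPartition) {s t : ℕ} (h : s < t) (ht : t ≤ P.m) :
    P.pt s < P.pt t := by
  apply P.t_mono
  simp only [Fin.lt_def]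
  omega

lemma lt_of_pt_lt_pt (P : IntervalPartition) {s t : ℕ} (h : P.pt s < P.pt t) : s < t := by
  by_contra hc
  exact absurd (P.pt_mono (by omega : t ≤ s)) (not_le.mpr h)

lemma pt_inj (P : IntervalPartition) {s t : ℕ} (hs : s ≤ P.m) (ht : t ≤ P.m)
    (h : P.pt s = P.pt t) : s = t := by
  rcases lt_trichotomy s t with hc | hc | hc
  · exact absurd (P.pt_lt_pt hc ht) (by rw [h]; exact lt_irrefl _)
  · exact hc
  · exact absurd (P.pt_lt_pt hc hs) (by rw [h]; exact lt_irrefl _)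

lemma pt_zero (P : IntervalPartition) : P.pt 0 = P.a := by
  rw [P.pt_of_le (by omega : 0 ≤ P.m), ← P.t_first]
  exact congrArg P.t (Fin.ext rfl)

lemma pt_top (P : IntervalPartition) {s : ℕ} (h : P.m ≤ s) : P.pt s = P.b := by
  unfold pt
  rw [← P.t_last]
  congr 1
  exact Fin.ext (by simp [Fin.last, min_eq_right h])

lemma refines_rfl (P : IntervalPartition) : P.Refines P := ⟨rfl, rfl, subset_rfl⟩

lemma refines_trans {P Q R : IntervalPartition} (h1 : P.Refines Q) (h2 : Q.Refines R) :
    P.Refines R := ⟨h1.1.trans h2.1, h1.2.1.trans h2.2.1, h1.2.2.trans h2.2.2⟩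

lemma exists_eq_pt_of_refines {P Q : IntervalPartition} (hPQ : P.Refines Q) {s : ℕ}
    (hs : s ≤ P.m) : ∃ s', s' ≤ Q.m ∧ Q.pt s' = P.pt s := by
  have hmem : P.pt s ∈ Set.range Q.t := by
    apply hPQ.2.2
    rw [P.pt_of_le hs]
    exact Set.mem_range_self _
  obtain ⟨a, ha⟩ := hmem
  refine ⟨a.val, Nat.lt_succ_iff.mp a.isLt, ?_⟩
  rw [Q.pt_of_le (Nat.lt_succ_iff.mp a.isLt), ← ha]

lemma sm_count (g : ℕ → ℕ) (c : ℕ) (h : ∀ s < c, g s < g (s + 1)) : g 0 + c ≤ g c := by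
  induction c with
  | zero => omega
  | succ c ih =>
    have h1 := ih (fun s hs => h s (by omega))
    have h2 := h c (by omega)
    omega

/-- Counting lemma: a refinement has at least as many breakpoints in any window. -/
lemma countB {P Q : IntervalPartition} (hPQ : P.Refines Q) {i c i' j' : ℕ}
    (hc : i + c ≤ P.m) (hi' : i' ≤ Q.m) (hQi' : Q.pt i' = P.pt i)
    (hj' : j' ≤ Q.m) (hQj' : Q.pt j' = P.pt (i + c)) : i' + c ≤ j' := by
  have hex : ∀ s : ℕ, ∃ s', s ≤ c → s' ≤ Q.m ∧ Q.pt s' = P.pt (i + s) := by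
    intro s
    by_cases h : s ≤ c
    · obtain ⟨s', h1, h2⟩ := exists_eq_pt_of_refines hPQ (show i + s ≤ P.m by omega)
      exact ⟨s', fun _ => ⟨h1, h2⟩⟩
    · exact ⟨0, fun hh => absurd hh h⟩
  choose g hg using hex
  have hmono : ∀ s < c, g s < g (s + 1) := by
    intro s hs
    apply Q.lt_of_pt_lt_pt
    rw [(hg s (by omega)).2, (hg (s + 1) (by omega)).2]
    exact P.pt_lt_pt (by omega) (by omega)
  have hcount := sm_count g c hmono
  have e0 : g 0 = i' := by
    apply Q.pt_inj (hg 0 (by omega)).1 hi'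
    rw [(hg 0 (by omega)).2, hQi', Nat.add_zero]
  have ec : g c = j' := by
    apply Q.pt_inj (hg c le_rfl).1 hj'
    rw [(hg c le_rfl).2, hQj']
  omega

/-- Interpolation: a B-spline support persisting from `P` to `R` is also a
B-spline support (with the same underlying set) in any intermediate `Q`. -/
lemma interp {P Q R : IntervalPartition} (hPQ : P.Refines Q) (hQR : Q.Refines R)
    {r i j i' j' : ℕ} (hP : P.IsBSupportIdx r i j) (hR : R.IsBSupportIdx r i' j')
    (hset : R.bSupportSet i' j' = P.bSupportSet i j) :
    ∃ i'' j'', Q.IsBSupportIdx r i'' j'' ∧ Q.bSupportSet i'' j'' = P.bSupportSet i j := by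
  obtain ⟨hij, hjm, hord⟩ := hP
  obtain ⟨hij', hjm', hord'⟩ := hR
  have huv : P.pt i < P.pt (j + 1) := P.pt_lt_pt (by omega) (by omega)
  have hend : R.pt i' = P.pt i ∧ R.pt (j' + 1) = P.pt (j + 1) :=
    (Set.Ico_eq_Ico_iff (Or.inr huv)).mp hset
  obtain ⟨a', ha'm, ha'⟩ := exists_eq_pt_of_refines hPQ (show i ≤ P.m by omega)
  obtain ⟨b', hb'm, hb'⟩ := exists_eq_pt_of_refines hPQ (show j + 1 ≤ P.m by omega)
  have hab : a' < b' := Q.lt_of_pt_lt_pt (by rw [ha', hb']; exact huv)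
  have h1 : a' + (j + 1 - i) ≤ b' := by
    apply countB hPQ (by omega) ha'm ha' hb'm
    rw [hb']
    congr 1
    omega
  have h2 : i' + (b' - a') ≤ j' + 1 := by
    apply countB hQR (i := a') (c := b' - a') (by omega) (by omega)
      (by rw [hend.1, ← ha']) (by omega)
    rw [hend.2, ← hb']
    congr 1
    omega
  refine ⟨a', b' - 1, ⟨by omega, by omega, ?_⟩, ?_⟩
  · by_cases hq : b' - 1 + 1 - a' = r
    · exact Or.inl hq
    · right
      have hcQ : b' - 1 + 1 - a' < r := by rcases hord' with h | h <;> omega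
      refine ⟨hcQ, ?_⟩
      have hcP : j + 1 - i < r := by omega
      rcases hord with h | ⟨_, h0 | hlast⟩
      · omega
      · left
        apply Q.pt_inj (by omega) (by omega)
        rw [ha', h0, P.pt_zero, Q.pt_zero, hPQ.1]
      · right
        have hb'' : b' = Q.m := by
          apply Q.pt_inj hb'm le_rfl
          rw [hb', show j + 1 = P.m by omega, P.pt_top le_rfl, Q.pt_top le_rfl, hPQ.2.1]
        omega
  · unfold IntervalPartition.bSupportSet
    rw [show b' - 1 + 1 = b' by omega, ha', hb']

lemma atomN_nonempty (P : IntervalPartition) {s : ℕ} (h : s < P.m) :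
    (P.atomN s).Nonempty :=
  Set.nonempty_Ico.mpr (P.pt_lt_pt (by omega) (by omega))

end IntervalPartition

open IntervalPartition in
lemma refines_of_le {d : ℕ} (F : ℕ → Fin d → IntervalPartition)
    (href : ∀ n δ, (F n δ).Refines (F (n + 1) δ)) {a b : ℕ} (δ : Fin d) (hab : a ≤ b) :
    (F a δ).Refines (F b δ) := by
  induction b, hab using Nat.le_induction with
  | base => exact refines_rfl _
  | succ b hb ih => exact refines_trans ih (href b δ)


open IntervalPartition in
/-- From a sufficiently structured sub-witness one contradicts direction `mv`-regularity. -/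
lemma kill_witness (d : ℕ) (F : ℕ → Fin d → IntervalPartition) (mv : Fin d → ℕ) (β : ℕ)
    (hreg : DirRegular d F mv β)
    (href : ∀ n δ, (F n δ).Refines (F (n + 1) δ))
    (δ : Fin d) (n : ℕ → ℕ) (ix : ℕ → Fin d → ℕ) (Λ : ℕ)
    (hn : ∀ l l', l ≤ l' → n l ≤ n l')
    (hb : ∀ l, l < Λ → ∀ δ', ix l δ' < (F (n l) δ').m)
    (hch : ∀ l l', l < l' → l' < Λ →
      prodAtomN (F (n l')) (ix l') ⊂ prodAtomN (F (n l)) (ix l))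
    (l₁ l₃ : ℕ) (h13 : l₁ + (β - 1) ≤ l₃) (h3Λ : l₃ < Λ)
    (I J I' J' : ℕ)
    (hIJ : (F (n l₁) δ).IsBSupportIdx (mv δ) I J)
    (hatom : (F (n l₁) δ).atomN (ix l₁ δ) ⊆ (F (n l₁) δ).bSupportSet I J)
    (hI'J' : (F (n l₃) δ).IsBSupportIdx (mv δ) I' J')
    (hset : (F (n l₃) δ).bSupportSet I' J' = (F (n l₁) δ).bSupportSet I J) : False := by
  obtain ⟨i'', j'', hQ, hQset⟩ := IntervalPartition.interp
    (refines_of_le F href δ (hn l₁ (l₁ + (β - 1)) (by omega)))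
    (refines_of_le F href δ (hn (l₁ + (β - 1)) l₃ h13)) hIJ hI'J' hset
  apply hreg
  refine ⟨δ, fun l => n (l₁ + min l (β - 1)), fun l => ix (l₁ + min l (β - 1)), I, J,
    fun l l' h => hn _ _ (by omega),
    fun l hl δ' => hb _ (by omega) δ',
    fun l l' hll' hl' => ?_, ?_, ?_, i'', j'', ?_, ?_⟩
  · have e1 : min l (β - 1) = l := by omega
    have e2 : min l' (β - 1) = l' := by omega
    beta_reduce
    rw [e1, e2]
    exact hch _ _ (by omega) (by omega)
  · have e : l₁ + min 0 (β - 1) = l₁ := by omega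
    beta_reduce
    rw [e]
    exact hIJ
  · have e : l₁ + min 0 (β - 1) = l₁ := by omega
    beta_reduce
    rw [e]
    exact hatom
  · have e : l₁ + min (β - 1) (β - 1) = l₁ + (β - 1) := by omega
    beta_reduce
    rw [e]
    exact hQ
  · have e : l₁ + min (β - 1) (β - 1) = l₁ + (β - 1) := by omega
    have e0 : l₁ + min 0 (β - 1) = l₁ := by omega
    beta_reduce
    rw [e, e0]
    exact hQset

lemma pigeon (N mm : ℕ) (hmm : 0 < mm) (S : Finset ℕ) (hS : S.card ≤ N) :
    ∃ t, t + mm ≤ (N + 1) * mm ∧ ∀ s, t ≤ s → s < t + mm → s ∉ S := by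
  by_contra hcon
  push_neg at hcon
  have hex : ∀ j : ℕ, ∃ s, j < N + 1 → j * mm ≤ s ∧ s < j * mm + mm ∧ s ∈ S := by
    intro j
    by_cases hj : j < N + 1
    · obtain ⟨s, h1, h2, h3⟩ := hcon (j * mm)
        (by calc j * mm + mm = (j + 1) * mm := by ring
              _ ≤ (N + 1) * mm := Nat.mul_le_mul_right mm (by omega))
      exact ⟨s, fun _ => ⟨h1, h2, h3⟩⟩
    · exact ⟨0, fun hh => absurd hh hj⟩
  choose f hf using hex
  have hinj : Set.InjOn f (Finset.range (N + 1)) := by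
    intro a ha b hb hab
    simp only [Finset.coe_range, Set.mem_Iio] at ha hb
    by_contra hne
    rcases lt_or_gt_of_ne hne with h | h
    · have h1 := (hf a ha).2.1
      have h2 := (hf b hb).1
      have : (a + 1) * mm ≤ b * mm := Nat.mul_le_mul_right mm (by omega)
      have : a * mm + mm ≤ b * mm := by linarith [this]
      omega
    · have h1 := (hf b hb).2.1
      have h2 := (hf a ha).1
      have : (b + 1) * mm ≤ a * mm := Nat.mul_le_mul_right mm (by omega)
      have : b * mm + mm ≤ a * mm := by linarith [this]
      omega
  have hcard := Finset.card_le_card_of_injOn f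
    (fun a ha => (hf a (Finset.mem_range.mp ha)).2.2) hinj
  simp only [Finset.card_range] at hcard
  omega

/-- **Lemma 4.3: lowering the direction-regularity order.** If a filtration is
`k`-regular with parameter `γ` and direction `m`-regular with parameter `β`, and
`m_i > k_i` in some direction `i`, then it is direction `(m − e_i)`-regular with a
parameter `β'` depending only on `k_i`, `γ` and `β`. -/
theorem direction_regularity_lowering (γ : ℝ) (β ki : ℕ) :
    ∃ β' : ℕ, ∀ d : ℕ, 1 ≤ d → ∀ i : Fin d, ∀ k m : Fin d → ℕ,
      (∀ δ, 1 ≤ k δ) → (∀ δ, 1 ≤ m δ) → k i = ki → k i < m i →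
      ∀ F : ℕ → Fin d → IntervalPartition,
        (∀ n δ, (F n δ).Refines (F (n + 1) δ)) →
        KRegularAll d F k γ → DirRegular d F m β →
        DirRegular d F (Function.update m i (m i - 1)) β' := by
  classical
  refine ⟨(2 * ki * (Nat.ceil (γ ^ 3) + 1) + 1) * (β + 1) + 1, ?_⟩
  intro d hd i k mv hk hm hki hkm F href hKreg hDir hex
  set M : ℕ := Nat.ceil (γ ^ 3) + 1 with hMdef
  set Nb : ℕ := 2 * ki * M with hNbdef
  set β' : ℕ := (Nb + 1) * (β + 1) + 1 with hβ'def
  have hrefAll : ∀ a b (δ' : Fin d), a ≤ b → (F a δ').Refines (F b δ') :=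
    fun a b δ' hab => refines_of_le F href δ' hab
  have hββ' : β + 1 ≤ β' := by
    rw [hβ'def]
    exact le_trans (Nat.le_mul_of_pos_left (β + 1) (show 0 < Nb + 1 by omega)) (Nat.le_succ _)
  have hβ'1 : β' - 1 = (Nb + 1) * (β + 1) := by
    rw [hβ'def]
    simp
  obtain ⟨δ, n, ix, i₀, j₀, hn, hbounds, hchain, hIJ, hatom, i', j', hI'J', hset⟩ := hex
  rcases ne_or_eq δ i with hne | rfl
  · -- Case A : direction different from i
    rw [Function.update_of_ne hne] at hIJ hI'J'
    exact kill_witness d F mv β hDir href δ n ix β' hn hbounds hchain 0 (β' - 1)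
      (by omega) (by omega) i₀ j₀ i' j' hIJ hatom hI'J' hset
  -- Case B : direction i
  rw [Function.update_self] at hIJ hI'J'
  have hr2 : 2 ≤ mv δ := by have := hk δ; omega
  have hkir : ki + 1 ≤ mv δ := by omega
  have hki1 : 1 ≤ ki := by have := hk δ; omega
  obtain ⟨hij₀, hj₀m, hord₀⟩ := hIJ
  have huv : (F (n 0) δ).pt i₀ < (F (n 0) δ).pt (j₀ + 1) :=
    (F (n 0) δ).pt_lt_pt (by omega) (by omega)
  have hPR : (F (n 0) δ).Refines (F (n (β' - 1)) δ) :=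
    hrefAll (n 0) (n (β' - 1)) δ (hn 0 (β' - 1) (by omega))
  have hend : (F (n (β' - 1)) δ).pt i' = (F (n 0) δ).pt i₀ ∧
      (F (n (β' - 1)) δ).pt (j' + 1) = (F (n 0) δ).pt (j₀ + 1) :=
    (Set.Ico_eq_Ico_iff (Or.inr huv)).mp hset
  obtain ⟨hij', hj'm, hord'⟩ := hI'J'
  by_cases htouch : i₀ = 0 ∨ j₀ = (F (n 0) δ).m - 1
  · -- Case B1 : the support touches the boundary
    have hcnt : j₀ + 1 - i₀ < mv δ := by rcases hord₀ with h | h <;> omega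
    have hIJ2 : (F (n 0) δ).IsBSupportIdx (mv δ) i₀ j₀ := ⟨hij₀, hj₀m, Or.inr ⟨hcnt, htouch⟩⟩
    have htouch' : i' = 0 ∨ j' = (F (n (β' - 1)) δ).m - 1 := by
      rcases htouch with h0 | h1
      · left
        apply (F (n (β' - 1)) δ).pt_inj (by omega) (by omega)
        rw [hend.1, h0, (F (n 0) δ).pt_zero, (F (n (β' - 1)) δ).pt_zero]
        exact hPR.1
      · right
        have hj1 : j' + 1 = (F (n (β' - 1)) δ).m := by
          apply (F (n (β' - 1)) δ).pt_inj (by omega) le_rfl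
          rw [hend.2, show j₀ + 1 = (F (n 0) δ).m by omega,
            (F (n 0) δ).pt_top le_rfl, (F (n (β' - 1)) δ).pt_top le_rfl]
          exact hPR.2.1
        omega
    have hI'J'2 : (F (n (β' - 1)) δ).IsBSupportIdx (mv δ) i' j' :=
      ⟨hij', hj'm, Or.inr ⟨by rcases hord' with h | h <;> omega, htouch'⟩⟩
    exact kill_witness d F mv β hDir href δ n ix β' hn hbounds hchain 0 (β' - 1)
      (by omega) (by omega) i₀ j₀ i' j' hIJ2 hatom hI'J'2 hset
  -- Case B2 : interior support
  push_neg at htouch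
  obtain ⟨hi₀0, hj₀last⟩ := htouch
  have hi₀1 : 1 ≤ i₀ := by omega
  have hj₀m' : j₀ + 1 < (F (n 0) δ).m := by omega
  have hcnt₀ : j₀ + 1 = i₀ + (mv δ - 1) := by
    rcases hord₀ with h | ⟨h1, h2 | h2⟩ <;> omega
  -- intermediate support indices
  have hQfam : ∀ l : ℕ, ∃ ii jj : ℕ, l < β' →
      (F (n l) δ).IsBSupportIdx (mv δ - 1) ii jj ∧
      (F (n l) δ).bSupportSet ii jj = (F (n 0) δ).bSupportSet i₀ j₀ := by
    intro l
    by_cases hl : l < β'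
    · obtain ⟨ii, jj, h1, h2⟩ := IntervalPartition.interp
        (hrefAll (n 0) (n l) δ (hn 0 l (by omega)))
        (hrefAll (n l) (n (β' - 1)) δ (hn l (β' - 1) (by omega)))
        ⟨hij₀, hj₀m, hord₀⟩ ⟨hij', hj'm, hord'⟩ hset
      exact ⟨ii, jj, fun _ => ⟨h1, h2⟩⟩
    · exact ⟨0, 0, fun h => absurd h hl⟩
  choose ii jj hij using hQfam
  have key : ∀ l, l < β' →
      (F (n l) δ).pt (ii l) = (F (n 0) δ).pt i₀ ∧
      (F (n l) δ).pt (jj l + 1) = (F (n 0) δ).pt (j₀ + 1) ∧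
      1 ≤ ii l ∧ jj l + 1 = ii l + (mv δ - 1) ∧ jj l < (F (n l) δ).m ∧
      (F (n l) δ).pt (ii l + ki) = (F (n 0) δ).pt (i₀ + ki) := by
    intro l hl
    obtain ⟨h1, h2⟩ := hij l hl
    obtain ⟨hiijj, hjjm, hordl⟩ := h1
    have hrefl := hrefAll (n 0) (n l) δ (hn 0 l (by omega))
    have hends : (F (n l) δ).pt (ii l) = (F (n 0) δ).pt i₀ ∧
        (F (n l) δ).pt (jj l + 1) = (F (n 0) δ).pt (j₀ + 1) :=
      (Set.Ico_eq_Ico_iff (Or.inr huv)).mp h2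
    have hii1 : 1 ≤ ii l := by
      by_contra h0
      have e : ii l = 0 := by omega
      have heq : (F (n l) δ).pt (ii l) = (F (n 0) δ).pt 0 := by
        rw [e, (F (n l) δ).pt_zero, (F (n 0) δ).pt_zero]
        exact hrefl.1.symm
      have h3 : (F (n 0) δ).pt 0 < (F (n 0) δ).pt i₀ :=
        (F (n 0) δ).pt_lt_pt (by omega) (by omega)
      rw [← hends.1, heq] at h3
      exact lt_irrefl _ h3
    have hvb : (F (n l) δ).pt (jj l + 1) < (F (n l) δ).b := by
      rw [hends.2, ← hrefl.2.1]
      calc (F (n 0) δ).pt (j₀ + 1) < (F (n 0) δ).pt ((F (n 0) δ).m) :=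
          (F (n 0) δ).pt_lt_pt (by omega) le_rfl
        _ = (F (n 0) δ).b := (F (n 0) δ).pt_top le_rfl
    have hjjlast : jj l + 1 ≠ (F (n l) δ).m := by
      intro h0
      rw [h0, (F (n l) δ).pt_top le_rfl] at hvb
      exact lt_irrefl _ hvb
    have hcntl : jj l + 1 = ii l + (mv δ - 1) := by
      rcases hordl with h | ⟨hlt, h0 | h0⟩ <;> omega
    obtain ⟨s', hs'm, hs'⟩ := IntervalPartition.exists_eq_pt_of_refines hrefl
      (show i₀ + ki ≤ (F (n 0) δ).m by omega)
    have hA : ii l + ki ≤ s' :=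
      IntervalPartition.countB hrefl (i := i₀) (c := ki) (by omega) (by omega) hends.1 hs'm hs'
    have hB : s' ≤ ii l + ki := by
      have hB' : s' + (mv δ - 1 - ki) ≤ jj l + 1 :=
        IntervalPartition.countB hrefl (i := i₀ + ki) (c := mv δ - 1 - ki) (by omega) hs'm hs'
          (by omega) (by rw [hends.2]; congr 1; omega)
      omega
    refine ⟨hends.1, hends.2, hii1, hcntl, by omega, ?_⟩
    rw [show ii l + ki = s' by omega, hs']
  set w : ℕ → ℝ := fun l => (F (n l) δ).pt (ii l - 1) with hwdef
  set L : ℝ := (F (n 0) δ).pt (i₀ + ki) - (F (n 0) δ).pt i₀ with hLdef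
  have hL : 0 < L := sub_pos.mpr ((F (n 0) δ).pt_lt_pt (by omega) (by omega))
  have hKR : ∀ l : ℕ, (F (n l) δ).KRegular ki γ := by
    intro l
    rw [← hki]
    exact hKreg (n l) δ
  have hτsup : ∀ l, l < β' → (F (n l) δ).IsBSupportIdx ki (ii l) (ii l + ki - 1) := by
    intro l hl
    obtain ⟨_, _, e3, e4, e5, _⟩ := key l hl
    exact ⟨by omega, by omega, Or.inl (by omega)⟩
  have hτlen : ∀ l, l < β' → (F (n l) δ).bSupportLen (ii l) (ii l + ki - 1) = L := by
    intro l hl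
    obtain ⟨e1, _, e3, _, _, e6⟩ := key l hl
    unfold IntervalPartition.bSupportLen
    rw [show ii l + ki - 1 + 1 = ii l + ki by omega, e6, e1]
  have hγ1 : (1 : ℝ) ≤ γ := by
    have h0 : (0 : ℕ) < β' := by omega
    have h := hKR 0 (ii 0) (ii 0 + ki - 1) (ii 0) (ii 0 + ki - 1) (hτsup 0 h0) (hτsup 0 h0)
      ((F (n 0) δ).pt_mono (by omega)) ((F (n 0) δ).pt_mono (by omega))
    rw [hτlen 0 h0] at h
    nlinarith [hL]
  have hγ0 : (0 : ℝ) ≤ γ := le_trans zero_le_one hγ1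
  have hwu : ∀ l, l < β' → w l < (F (n 0) δ).pt i₀ := by
    intro l hl
    obtain ⟨e1, _, e3, e4, e5, _⟩ := key l hl
    rw [← e1]
    simp only [hwdef]
    exact (F (n l) δ).pt_lt_pt (by omega) (by omega)
  have hwmono : ∀ l l', l ≤ l' → l' < β' → w l ≤ w l' := by
    intro l l' hle hl'
    have hl : l < β' := by omega
    obtain ⟨e1, _, e3, e4, e5, _⟩ := key l hl
    obtain ⟨f1, _, f3, f4, f5, _⟩ := key l' hl'
    obtain ⟨s', hs'm, hs'⟩ := IntervalPartition.exists_eq_pt_of_refines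
      (hrefAll (n l) (n l') δ (hn l l' hle)) (show ii l - 1 ≤ (F (n l) δ).m by omega)
    have h1 : (F (n l') δ).pt s' < (F (n l') δ).pt (ii l') := by
      rw [hs', f1]
      exact hwu l hl
    have h2 : s' ≤ ii l' - 1 := by
      have := (F (n l') δ).lt_of_pt_lt_pt h1
      omega
    simp only [hwdef]
    calc (F (n l) δ).pt (ii l - 1) = (F (n l') δ).pt s' := hs'.symm
      _ ≤ (F (n l') δ).pt (ii l' - 1) := (F (n l') δ).pt_mono h2
  have hwlb : ∀ l, l < β' → (F (n 0) δ).pt i₀ - γ * L ≤ w l := by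
    intro l hl
    obtain ⟨e1, e2, e3, e4, e5, e6⟩ := key l hl
    have hA1sup : (F (n l) δ).IsBSupportIdx ki (ii l - ki) (ii l - 1) := by
      refine ⟨by omega, by omega, ?_⟩
      rcases le_or_gt ki (ii l) with h | h
      · exact Or.inl (by omega)
      · exact Or.inr ⟨by omega, Or.inl (by omega)⟩
    have hreg := hKR l (ii l - ki) (ii l - 1) (ii l) (ii l + ki - 1) hA1sup (hτsup l hl)
      ((F (n l) δ).pt_mono (by omega)) ((F (n l) δ).pt_mono (by omega))
    rw [hτlen l hl] at hreg
    unfold IntervalPartition.bSupportLen at hreg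
    rw [show ii l - 1 + 1 = ii l by omega, e1] at hreg
    have hmono : (F (n l) δ).pt (ii l - ki) ≤ w l := by
      simp only [hwdef]
      exact (F (n l) δ).pt_mono (by omega)
    linarith
  set cnt : ℕ → ℕ → ℕ :=
    fun l l' => ((Finset.Ico l l').filter (fun tt => w tt < w (tt + 1))).card with hcntdef
  have hcnt_zero : ∀ l, cnt l l = 0 := by
    intro l
    simp [hcntdef]
  have hcnt_succ : ∀ l l', l ≤ l' →
      cnt l (l' + 1) = cnt l l' + (if w l' < w (l' + 1) then 1 else 0) := by
    intro l l' h
    simp only [hcntdef]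
    rw [Nat.Ico_succ_right_eq_insert_Ico h, Finset.filter_insert]
    split
    · rw [Finset.card_insert_of_notMem (by simp)]
    · simp
  have hcnt_add : ∀ l l'' l', l ≤ l'' → l'' ≤ l' → cnt l l' = cnt l l'' + cnt l'' l' := by
    intro l l'' l' h1 h2
    simp only [hcntdef]
    rw [← Finset.Ico_union_Ico_eq_Ico h1 h2, Finset.filter_union,
      Finset.card_union_of_disjoint
        (Finset.disjoint_filter_filter (Finset.Ico_disjoint_Ico_consecutive l l'' l'))]
  have E1 : ∀ l l', l ≤ l' → l' < β' →
      w l ≤ (F (n l') δ).pt (ii l' - 1 - cnt l l') ∧ cnt l l' + 1 ≤ ii l' := by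
    intro l l' hle
    induction l', hle using Nat.le_induction with
    | base =>
      intro hl'
      rw [hcnt_zero]
      refine ⟨?_, ?_⟩
      · simp only [hwdef, Nat.sub_zero]
        exact le_rfl
      · have := (key l hl').2.2.1
        omega
    | succ l' hll' ih =>
      intro hl'
      have hl'β : l' < β' := by omega
      obtain ⟨ih1, ih2⟩ := ih hl'β
      obtain ⟨e1, e2, e3, e4, e5, e6⟩ := key l' hl'β
      obtain ⟨f1, f2, f3, f4, f5, f6⟩ := key (l' + 1) hl'
      have hrefs := hrefAll (n l') (n (l' + 1)) δ (hn l' (l' + 1) (by omega))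
      obtain ⟨sz, hszm, hsz⟩ := IntervalPartition.exists_eq_pt_of_refines hrefs
        (show ii l' - 1 - cnt l l' ≤ (F (n l') δ).m by omega)
      obtain ⟨sw, hswm, hsw⟩ := IntervalPartition.exists_eq_pt_of_refines hrefs
        (show ii l' - 1 ≤ (F (n l') δ).m by omega)
      have hB : sz + cnt l l' ≤ sw := by
        apply IntervalPartition.countB hrefs (i := ii l' - 1 - cnt l l') (c := cnt l l') (by omega) hszm hsz hswm
        rw [hsw]
        congr 1
        omega
      have hswlt : sw < ii (l' + 1) := by
        apply (F (n (l' + 1)) δ).lt_of_pt_lt_pt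
        rw [hsw, f1]
        exact hwu l' hl'β
      rw [hcnt_succ l l' hll']
      by_cases hif : w l' < w (l' + 1)
      · rw [if_pos hif]
        have hlt : sw < ii (l' + 1) - 1 := by
          have hp : (F (n (l' + 1)) δ).pt sw < (F (n (l' + 1)) δ).pt (ii (l' + 1) - 1) := by
            rw [hsw]
            exact hif
          have := (F (n (l' + 1)) δ).lt_of_pt_lt_pt hp
          omega
        refine ⟨?_, by omega⟩
        calc w l ≤ (F (n l') δ).pt (ii l' - 1 - cnt l l') := ih1
          _ = (F (n (l' + 1)) δ).pt sz := hsz.symm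
          _ ≤ (F (n (l' + 1)) δ).pt (ii (l' + 1) - 1 - (cnt l l' + 1)) :=
              (F (n (l' + 1)) δ).pt_mono (by omega)
      · rw [if_neg hif]
        have hweq : w (l' + 1) = w l' :=
          le_antisymm (not_lt.mp hif) (hwmono l' (l' + 1) (by omega) hl')
        have hsweq : sw = ii (l' + 1) - 1 := by
          apply (F (n (l' + 1)) δ).pt_inj hswm (by omega)
          rw [hsw]
          exact hweq.symm
        refine ⟨?_, by omega⟩
        calc w l ≤ (F (n l') δ).pt (ii l' - 1 - cnt l l') := ih1
          _ = (F (n (l' + 1)) δ).pt sz := hsz.symm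
          _ ≤ (F (n (l' + 1)) δ).pt (ii (l' + 1) - 1 - (cnt l l' + 0)) :=
              (F (n (l' + 1)) δ).pt_mono (by omega)
  have E2 : ∀ l l', l ≤ l' → l' < β' → 2 * ki ≤ cnt l l' →
      L ≤ γ * (γ * (w l' - w l)) := by
    intro l l' hle hl' hc
    obtain ⟨ih1, ih2⟩ := E1 l l' hle hl'
    obtain ⟨f1, f2, f3, f4, f5, f6⟩ := key l' hl'
    have hi' : 2 * ki + 1 ≤ ii l' := by omega
    have hA1 : (F (n l') δ).IsBSupportIdx ki (ii l' - ki) (ii l' - 1) :=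
      ⟨by omega, by omega, Or.inl (by omega)⟩
    have hA2 : (F (n l') δ).IsBSupportIdx ki (ii l' - 2 * ki) (ii l' - ki - 1) :=
      ⟨by omega, by omega, Or.inl (by omega)⟩
    have hreg1 := hKR l' (ii l') (ii l' + ki - 1) (ii l' - ki) (ii l' - 1) (hτsup l' hl') hA1
      ((F (n l') δ).pt_mono (by omega)) ((F (n l') δ).pt_mono (by omega))
    have hreg2 := hKR l' (ii l' - ki) (ii l' - 1) (ii l' - 2 * ki) (ii l' - ki - 1) hA1 hA2
      ((F (n l') δ).pt_mono (by omega)) ((F (n l') δ).pt_mono (by omega))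
    rw [hτlen l' hl'] at hreg1
    unfold IntervalPartition.bSupportLen at hreg1 hreg2
    rw [show ii l' - 1 + 1 = ii l' by omega] at hreg1 hreg2
    rw [show ii l' - ki - 1 + 1 = ii l' - ki by omega] at hreg2
    have hw1 : w l ≤ (F (n l') δ).pt (ii l' - 2 * ki) := by
      calc w l ≤ (F (n l') δ).pt (ii l' - 1 - cnt l l') := ih1
        _ ≤ (F (n l') δ).pt (ii l' - 2 * ki) := (F (n l') δ).pt_mono (by omega)
    have hw2 : (F (n l') δ).pt (ii l' - ki) ≤ w l' := by
      simp only [hwdef]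
      exact (F (n l') δ).pt_mono (by omega)
    calc L ≤ γ * ((F (n l') δ).pt (ii l') - (F (n l') δ).pt (ii l' - ki)) := hreg1
      _ ≤ γ * (γ * ((F (n l') δ).pt (ii l' - ki) - (F (n l') δ).pt (ii l' - 2 * ki))) :=
          mul_le_mul_of_nonneg_left hreg2 hγ0
      _ ≤ γ * (γ * (w l' - w l)) := by
          apply mul_le_mul_of_nonneg_left (mul_le_mul_of_nonneg_left (by linarith) hγ0) hγ0
  have E3 : ∀ Mi l l', l ≤ l' → l' < β' → 2 * ki * Mi ≤ cnt l l' →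
      (Mi : ℝ) * L ≤ γ * (γ * (w l' - w l)) := by
    intro Mi
    induction Mi with
    | zero =>
      intro l l' hle hl' _
      have hw := hwmono l l' hle hl'
      simp only [Nat.cast_zero, zero_mul]
      exact mul_nonneg hγ0 (mul_nonneg hγ0 (by linarith))
    | succ Mi ih =>
      intro l l' hle hl' hc
      have hc' : 2 * ki * Mi + 2 * ki ≤ cnt l l' := by
        calc 2 * ki * Mi + 2 * ki = 2 * ki * (Mi + 1) := by ring
          _ ≤ cnt l l' := hc
      have hp : ∃ x, l ≤ x ∧ x ≤ l' ∧ 2 * ki ≤ cnt l x := by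
        refine ⟨l', hle, le_rfl, ?_⟩
        have h1 : 2 * ki ≤ 2 * ki * Mi + 2 * ki := by omega
        omega
      set X : ℕ := 2 * ki * Mi with hXdef
      clear_value X
      set l'' : ℕ := Nat.find hp with hl''def
      have hfind : l ≤ l'' ∧ l'' ≤ l' ∧ 2 * ki ≤ cnt l l'' := Nat.find_spec hp
      have hl''l : l < l'' := by
        rcases Nat.lt_or_ge l l'' with h | h
        · exact h
        · exfalso
          have hll'' : l'' = l := by
            have := hfind.1
            omega
          rw [hll''] at hfind
          rw [hcnt_zero] at hfind
          omega
      have hminn : ¬ (l ≤ l'' - 1 ∧ l'' - 1 ≤ l' ∧ 2 * ki ≤ cnt l (l'' - 1)) :=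
        Nat.find_min hp (by omega)
      have hupper : cnt l l'' ≤ 2 * ki := by
        have hsucc : cnt l (l'' - 1 + 1) = cnt l (l'' - 1) +
            (if w (l'' - 1) < w (l'' - 1 + 1) then 1 else 0) := hcnt_succ l (l'' - 1) (by omega)
        have hlow : cnt l (l'' - 1) < 2 * ki := by
          by_contra hcc
          exact hminn ⟨by omega, by omega, by omega⟩
        have he : l'' - 1 + 1 = l'' := by omega
        rw [he] at hsucc
        split at hsucc <;> omega
      have hsplit : cnt l l' = cnt l l'' + cnt l'' l' := hcnt_add l l'' l' (by omega) hfind.2.1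
      have h2 : X ≤ cnt l'' l' := by omega
      have hw2 := E2 l l'' (by omega) (by omega) hfind.2.2
      have hih := ih l'' l' hfind.2.1 hl' (by omega)
      push_cast
      have hdist : γ * (γ * (w l'' - w l)) + γ * (γ * (w l' - w l'')) =
          γ * (γ * (w l' - w l)) := by ring
      linarith
  -- the total number of increases of w is bounded
  have hcnt_bound : cnt 0 (β' - 1) ≤ Nb := by
    by_contra hcon
    push_neg at hcon
    rw [hNbdef] at hcon
    have hE := E3 M 0 (β' - 1) (by omega) (by omega) (le_of_lt hcon)
    have hub : w (β' - 1) - w 0 ≤ γ * L := by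
      have h1 := hwu (β' - 1) (by omega)
      have h2 := hwlb 0 (by omega)
      linarith
    have hchain3 : (M : ℝ) * L ≤ γ * (γ * (γ * L)) :=
      le_trans hE (mul_le_mul_of_nonneg_left (mul_le_mul_of_nonneg_left hub hγ0) hγ0)
    have hMreal : γ ^ 3 + 1 ≤ (M : ℝ) := by
      rw [hMdef]
      push_cast
      linarith [Nat.le_ceil (γ ^ 3)]
    nlinarith [mul_le_mul_of_nonneg_right hMreal (le_of_lt hL)]
  -- pigeonhole: a window of β+1 steps with no increase
  obtain ⟨t, ht1, ht2⟩ := pigeon Nb (β + 1) (by omega)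
    ((Finset.Ico 0 (β' - 1)).filter (fun tt => w tt < w (tt + 1)))
    (by simpa only [hcntdef] using hcnt_bound)
  rw [← hβ'1] at ht1
  have hconst : ∀ s, s ≤ β → w (t + s) = w t := by
    intro s hs
    induction s with
    | zero => rfl
    | succ s ihs =>
      have ih' := ihs (by omega)
      have hnot := ht2 (t + s) (by omega) (by omega)
      have hmem : t + s ∈ Finset.Ico 0 (β' - 1) := Finset.mem_Ico.mpr ⟨by omega, by omega⟩
      have hnlt : ¬ w (t + s) < w (t + s + 1) := fun hlt =>
        hnot (Finset.mem_filter.mpr ⟨hmem, hlt⟩)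
      have hmon := hwmono (t + s) (t + s + 1) (by omega) (by omega)
      have hh : w (t + s + 1) = w (t + s) := le_antisymm (not_lt.mp hnlt) hmon
      rw [show t + (s + 1) = t + s + 1 by omega, hh, ih']
  -- final contradiction via the order-(mv δ) support [w t, v)
  have hl₁ : t < β' := by omega
  have hl₃ : t + (β - 1) < β' := by omega
  obtain ⟨g1, g2, g3, g4, g5, g6⟩ := key t hl₁
  obtain ⟨q1, q2, q3, q4, q5, q6⟩ := key (t + (β - 1)) hl₃
  have hweqfin : w (t + (β - 1)) = w t := hconst (β - 1) (by omega)
  apply kill_witness d F mv β hDir href δ n ix β' hn hbounds hchain t (t + (β - 1))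
    le_rfl hl₃ (ii t - 1) (jj t) (ii (t + (β - 1)) - 1) (jj (t + (β - 1)))
  · exact ⟨by omega, by omega, Or.inl (by omega)⟩
  · have hsub : (F (n t) δ).atomN (ix t δ) ⊆ (F (n 0) δ).bSupportSet i₀ j₀ := by
      rcases Nat.eq_zero_or_pos t with rfl | hpos
      · exact hatom
      · have hss := (hchain 0 t hpos hl₁).subset
        simp only [prodAtomN] at hss
        rcases Set.univ_pi_subset_univ_pi_iff.mp hss with hcomp | ⟨δ', hemp⟩
        · exact (hcomp δ).trans hatom
        · exact absurd hemp
            (Set.Nonempty.ne_empty ((F (n t) δ').atomN_nonempty (hbounds t hl₁ δ')))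
    refine hsub.trans ?_
    unfold IntervalPartition.bSupportSet
    rw [g2]
    apply Set.Ico_subset_Ico _ le_rfl
    exact le_of_lt (hwu t hl₁)
  · exact ⟨by omega, by omega, Or.inl (by omega)⟩
  · unfold IntervalPartition.bSupportSet
    rw [g2, q2]
    have hw' : (F (n (t + (β - 1))) δ).pt (ii (t + (β - 1)) - 1) =
        (F (n t) δ).pt (ii t - 1) := hweqfin
    rw [hw']
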